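/- For every sufficiently large positive integer n, setting m = n − ⌈log₄ n⌉ − 5 and T = ⌈5n/2⌉, there exists an (n,T,B)-synthesis code C ⊆ Σ^n with |C| ≥ 2^{2m} = 2^{2n − 2⌈log₄ n⌉ − 10}; that is, a code of length n, synthesis time at most 2.5n, correcting a single insertion or deletion, with redundancy at most 2⌈log₄ n⌉ + 10 bits. -/

import Mathlib

/-- A list of integers is quaternary if all entries lie in {1,2,3,4}. -/
def IsQ (x : List ℤ) : Prop := ∀ a ∈ x, 1 ≤ a ∧ a ≤ 4

/-- The alternating quaternary supersequence 1,2,3,4,1,2,3,4,... of length `T`. -/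
def altSeq (T : ℕ) : List ℤ := (List.range T).map (fun i => ((i % 4 : ℕ) : ℤ) + 1)

/-- The synthesis time of `x`: the least `T` such that `x` is a subsequence of `altSeq T`. -/
noncomputable def synTime (x : List ℤ) : ℕ := sInf {T : ℕ | x.Sublist (altSeq T)}

/-- The shifted modulo: the unique element of {1,2,3,4} congruent to `a` mod 4. -/
def mods4 (a : ℤ) : ℤ := (a - 1) % 4 + 1

/-- The differential word of `x`. -/
def diffWord (x : List ℤ) : List ℤ := List.zipWith (fun p c => mods4 (c - p)) (0 :: x) x

/-- The set of quaternary words of length `n` with synthesis time at most `T`. -/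
def W (n : ℕ) (T : ℤ) : Set (List ℤ) :=
  {x | x.length = n ∧ IsQ x ∧ (synTime x : ℤ) ≤ T}

/-- `A n T` is the number of quaternary words of length `n` with synthesis time at most `T`. -/
noncomputable def A (n : ℕ) (T : ℤ) : ℕ := (W n T).ncard

/-- The single-indel ball of `x`. -/
def ball (x : List ℤ) : Set (List ℤ) :=
  {y | y = x ∨ (y.length + 1 = x.length ∧ y.Sublist x) ∨
       (x.length + 1 = y.length ∧ IsQ y ∧ x.Sublist y)}

/-- The auxiliary binary sequence of `x` (as 0/1 naturals). -/
def auxSeq (x : List ℤ) : List ℕ :=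
  List.zipWith (fun a b => if a ≤ b then 1 else 0) x x.tail

/-- VT syndrome of a binary word: `∑ i·w_i` with positions starting from 1. -/
def vtSyn (w : List ℕ) : ℕ := ∑ i ∈ Finset.range w.length, (i + 1) * w.getD i 0

/-- The quaternary VT code. -/
def VTn (n : ℕ) (a : ZMod n) (b : ZMod 4) : Set (List ℤ) :=
  {x | x.length = n ∧ IsQ x ∧ ((vtSyn (auxSeq x) : ℕ) : ZMod n) = a ∧
       ((x.sum : ℤ) : ZMod 4) = b}

/-- The quaternary VT code with synthesis time constraint. -/
def VTnT (n : ℕ) (a : ZMod n) (b : ZMod 4) (T : ℤ) : Set (List ℤ) :=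
  {x ∈ VTn n a b | (synTime x : ℤ) ≤ T}

/-!
Take a fibre of the quaternary Varshamov–Tenengolts construction `VTn n a b`, restricted to
words of synthesis time at most `⌈5n/2⌉`.

Single-indel balls of two codewords can only meet if the codewords share a single deletion.
The symbol sum modulo 4 then identifies the deleted symbol, Levenshtein's argument applied to the
VT syndrome identifies the auxiliary (ascent) sequence, and equal auxiliary sequences force the
two deletions to lie in one run, so the codewords coincide.

The synthesis time of a quaternary word is at most the sum of its differential word (embed it
greedily into `1234 1234 …`). Replacing every differential symbol `d` by `5 - d` is an involution
exchanging sums `σ` and `5n - σ`, so at least half of the `4^n` words qualify. Pigeonholing them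
into the `4n` classes `(a, b)` leaves a class of size at least
`4^n / (8n) ≥ 2^(2(n - ⌈log₄ n⌉ - 5))`.
-/

open Finset in
lemma sum_range_getD_eq_sum (w : List ℕ) : ∑ i ∈ range w.length, w.getD i 0 = w.sum := by
  induction w with
  | nil => simp
  | cons a t ih => simpa [sum_range_succ', add_comm] using ih

open Finset in
lemma vtSyn_cons (a : ℕ) (t : List ℕ) : vtSyn (a :: t) = a + t.sum + vtSyn t := by
  simp only [vtSyn, List.length_cons, sum_range_succ', List.getD_cons_succ, List.getD_cons_zero,
    add_mul, one_mul, sum_add_distrib, sum_range_getD_eq_sum]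
  ring

lemma vtSyn_insertIdx (w : List ℕ) {i : ℕ} (b : ℕ) (hi : i ≤ w.length) :
    vtSyn (w.insertIdx i b) = vtSyn w + (i + 1) * b + (w.drop i).sum := by
  induction w generalizing i with
  | nil =>
    obtain rfl : i = 0 := by simpa using hi
    simp [vtSyn_cons, add_comm]
  | cons a t ih =>
    cases i with
    | zero => simp [vtSyn_cons]; ring
    | succ i =>
      have hi' : i ≤ t.length := by simpa using hi
      rw [List.insertIdx_succ_cons, vtSyn_cons, ih hi', vtSyn_cons, List.drop_succ_cons,
        (List.perm_insertIdx b t hi').sum_eq, List.sum_cons]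
      ring

lemma List.insertIdx_eq_insertIdx_of_forall_eq {α : Type*} (w : List α) {i j : ℕ} (b : α)
    (hij : i ≤ j) (hj : j ≤ w.length) (hrun : ∀ x ∈ (w.take j).drop i, x = b) :
    w.insertIdx i b = w.insertIdx j b := by
  induction w generalizing i j with
  | nil =>
    obtain rfl : j = 0 := by simpa using hj
    obtain rfl : i = 0 := by omega
    rfl
  | cons a t ih =>
    cases j with
    | zero =>
      obtain rfl : i = 0 := by omega
      rfl
    | succ j =>
      cases i with
      | zero =>
        obtain rfl : a = b := hrun a (by simp)
        rw [List.insertIdx_succ_cons, ← ih (Nat.zero_le j) (by simpa using hj)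
          (fun x hx => hrun x (by simp_all))]
        rfl
      | succ i =>
        rw [List.insertIdx_succ_cons, List.insertIdx_succ_cons,
          ih (i := i) (j := j) (by omega) (by simpa using hj)
            (fun x hx => hrun x (by simpa using hx))]

lemma sum_le_length_of_forall_le_one {w : List ℕ} (hw : ∀ x ∈ w, x ≤ 1) : w.sum ≤ w.length := by
  simpa using List.sum_le_card_nsmul w 1 hw

lemma forall_eq_one_of_sum_eq_length {w : List ℕ} (hw : ∀ x ∈ w, x ≤ 1)
    (h : w.sum = w.length) : ∀ x ∈ w, x = 1 := by
  induction w with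
  | nil => simp
  | cons a t ih =>
    simp only [List.forall_mem_cons, List.sum_cons, List.length_cons] at hw h ⊢
    have := sum_le_length_of_forall_le_one hw.2
    exact ⟨by omega, ih hw.2 (by omega)⟩

/-- Levenshtein's single-deletion decoding of binary VT codes. -/
theorem insertIdx_eq_insertIdx_of_vtSyn_eq {w : List ℕ} (hw : ∀ x ∈ w, x ≤ 1) {M i j b c : ℕ}
    (hM : w.length + 2 ≤ M) (hi : i ≤ w.length) (hj : j ≤ w.length) (hb : b ≤ 1) (hc : c ≤ 1)
    (h : (vtSyn (w.insertIdx i b) : ZMod M) = vtSyn (w.insertIdx j c)) :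
    w.insertIdx i b = w.insertIdx j c := by
  wlog hij : i ≤ j generalizing i j b c
  · exact (this hj hi hc hb h.symm (by omega)).symm
  have hsum_le : ∀ k, (w.drop k).sum ≤ w.length - k := fun k => by
    simpa using sum_le_length_of_forall_le_one (fun x hx => hw x (List.mem_of_mem_drop hx))
  have hweights : (i + 1) * b + (w.drop i).sum = (j + 1) * c + (w.drop j).sum := by
    rw [vtSyn_insertIdx w b hi, vtSyn_insertIdx w c hj] at h
    have := hsum_le i
    have := hsum_le j
    have h' : (((i + 1) * b + (w.drop i).sum : ℕ) : ZMod M) =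
        (((j + 1) * c + (w.drop j).sum : ℕ) : ZMod M) := by
      push_cast at h ⊢
      linear_combination h
    rwa [ZMod.natCast_eq_natCast_iff', Nat.mod_eq_of_lt (by interval_cases b <;> omega),
      Nat.mod_eq_of_lt (by interval_cases c <;> omega)] at h'
  set run := (w.drop i).take (j - i)
  have hrun_bits : ∀ x ∈ run, x ≤ 1 := fun x hx =>
    hw x (List.mem_of_mem_drop (List.mem_of_mem_take hx))
  have hrun_length : run.length = j - i := by simp [run]; omega
  have hsplit : (w.drop i).sum = run.sum + (w.drop j).sum := by
    rw [← List.sum_take_add_sum_drop (w.drop i) (j - i), List.drop_drop, Nat.add_sub_cancel' hij]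
  have hrun_le := sum_le_length_of_forall_le_one hrun_bits
  have hrun : ∀ x ∈ run, x = b := by
    interval_cases b <;> interval_cases c
    · exact List.sum_eq_zero_iff_forall_eq_nat.1 (by omega)
    · omega
    · omega
    · exact forall_eq_one_of_sum_eq_length hrun_bits (by omega)
  obtain rfl : b = c := by interval_cases b <;> interval_cases c <;> omega
  exact List.insertIdx_eq_insertIdx_of_forall_eq w b hij hj (by rwa [List.drop_take])

def leBit (a b : ℤ) : ℕ := if a ≤ b then 1 else 0

lemma leBit_le_one (a b : ℤ) : leBit a b ≤ 1 := by
  unfold leBit; split <;> omega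

lemma auxSeq_cons_cons (a b : ℤ) (t : List ℤ) :
    auxSeq (a :: b :: t) = leBit a b :: auxSeq (b :: t) := rfl

lemma length_auxSeq (x : List ℤ) : (auxSeq x).length = x.length - 1 := by
  simp [auxSeq]

lemma le_one_of_mem_auxSeq {x : List ℤ} {b : ℕ} (hb : b ∈ auxSeq x) : b ≤ 1 := by
  obtain ⟨i, hi, rfl⟩ := List.getElem_of_mem hb
  simp only [auxSeq, List.getElem_zipWith]
  exact leBit_le_one _ _

lemma auxSeq_drop (x : List ℤ) (k : ℕ) : (auxSeq x).drop k = auxSeq (x.drop k) := by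
  simp [auxSeq, List.drop_zipWith, List.tail_drop]

lemma leBit_eq_or_leBit_eq (a b c : ℤ) : leBit a c = leBit a b ∨ leBit a c = leBit b c := by
  unfold leBit; split_ifs <;> omega

lemma exists_auxSeq_eq_insertIdx (a : ℤ) : ∀ l r : List ℤ, l ++ r ≠ [] →
    ∃ i ≤ (auxSeq (l ++ r)).length, ∃ b ≤ 1,
      auxSeq (l ++ a :: r) = (auxSeq (l ++ r)).insertIdx i b
  | [], [], h => absurd rfl h
  | [], r₀ :: _, _ => ⟨0, by simp, leBit a r₀, leBit_le_one _ _, by simp [auxSeq_cons_cons]⟩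
  | [c], [], _ => ⟨0, by simp, _, leBit_le_one _ _, rfl⟩
  | [c], r₀ :: t, _ => by
    -- the old bit `leBit c r₀` survives as one of the two new bits `leBit c a`, `leBit a r₀`
    rcases leBit_eq_or_leBit_eq c a r₀ with h | h
    · exact ⟨1, by simp [length_auxSeq], leBit a r₀, leBit_le_one _ _, by
        simp [auxSeq_cons_cons, h]⟩
    · exact ⟨0, by simp, leBit c a, leBit_le_one _ _, by simp [auxSeq_cons_cons, h]⟩
  | c :: d :: l, r, _ => by
    obtain ⟨i, hi, b, hb, h⟩ := exists_auxSeq_eq_insertIdx a (d :: l) r (by simp)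
    refine ⟨i + 1, ?_, b, hb, ?_⟩
    · simp only [List.cons_append, auxSeq_cons_cons, List.length_cons] at hi ⊢
      omega
    · simp only [List.cons_append, auxSeq_cons_cons] at h ⊢
      rw [h, List.insertIdx_succ_cons]

lemma isChain_of_auxSeq_cons_append_eq (s : ℤ) (r : List ℤ) : ∀ (mid : List ℤ) (a : ℤ),
    auxSeq (a :: (mid ++ r)) = auxSeq (mid ++ s :: r) →
      (a :: (mid ++ [s])).IsChain (· ≤ ·) ∨ (a :: (mid ++ [s])).IsChain (· > ·)
  | [], a, _ => by simpa using le_or_gt a s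
  | m :: t, a, H => by
    obtain ⟨h, t', ht⟩ := List.exists_cons_of_ne_nil (List.append_ne_nil_of_right_ne_nil t
      (List.cons_ne_nil s []))
    have hr : t ++ s :: r = h :: (t' ++ r) := by simpa using congrArg (· ++ r) ht
    simp only [List.cons_append] at H ⊢
    rw [hr, auxSeq_cons_cons, auxSeq_cons_cons, List.cons.injEq, ← hr] at H
    have hlink := H.1
    rw [ht]
    unfold leBit at hlink
    rcases isChain_of_auxSeq_cons_append_eq s r t m H.2 with hc | hc <;> rw [ht] at hc
    · have hmh := (List.isChain_cons_cons.1 hc).1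
      exact Or.inl (List.isChain_cons_cons.2 ⟨by split_ifs at hlink; omega, hc⟩)
    · have hmh := (List.isChain_cons_cons.1 hc).1
      exact Or.inr (List.isChain_cons_cons.2 ⟨by split_ifs at hlink <;> omega, hc⟩)

/-- The comparison bits along the cycle `s, mid, s` all agree, so the cycle is monotone. -/
lemma forall_eq_of_auxSeq_cons_append_eq {s : ℤ} {mid r : List ℤ}
    (h : auxSeq (s :: (mid ++ r)) = auxSeq (mid ++ s :: r)) : ∀ m ∈ mid, m = s := by
  rcases isChain_of_auxSeq_cons_append_eq s r mid s h with hc | hc <;>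
    rw [List.isChain_iff_pairwise, List.pairwise_cons, List.pairwise_append] at hc
  · intro m hm
    exact le_antisymm (hc.2.2.2 m hm s (by simp)) (hc.1 m (by simp [hm]))
  · exact absurd (hc.1 s (by simp)) (lt_irrefl s)

lemma eq_of_intCast_eq_of_mem_Icc {s t : ℤ} (hs : 1 ≤ s ∧ s ≤ 4) (ht : 1 ≤ t ∧ t ≤ 4)
    (h : (s : ZMod 4) = t) : s = t := by
  rw [ZMod.intCast_eq_intCast_iff'] at h
  omega

lemma cons_append_eq_append_cons_of_forall_eq {α : Type*} {s : α} {mid r : List α}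
    (h : ∀ m ∈ mid, m = s) : s :: (mid ++ r) = mid ++ s :: r := by
  rw [List.eq_replicate_iff.2 ⟨rfl, h⟩, ← List.cons_append, ← List.replicate_succ,
    List.replicate_succ', List.append_assoc, List.singleton_append]

theorem VTn.eq_of_delete_insert {n : ℕ} (hn : 2 ≤ n) {a : ZMod n} {b : ZMod 4}
    {l mid r : List ℤ} {s t : ℤ} (hx : l ++ s :: (mid ++ r) ∈ VTn n a b)
    (hy : l ++ mid ++ t :: r ∈ VTn n a b) : l ++ s :: (mid ++ r) = l ++ mid ++ t :: r := by
  obtain ⟨hx_len, hx_quat, hx_syn, hx_sum⟩ := hx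
  obtain ⟨hy_len, hy_quat, hy_syn, hy_sum⟩ := hy
  obtain rfl : s = t := by
    refine eq_of_intCast_eq_of_mem_Icc (hx_quat s (by simp)) (hy_quat t (by simp)) ?_
    have h := hx_sum.trans hy_sum.symm
    simp only [List.sum_append, List.sum_cons, Int.cast_add] at h
    linear_combination h
  have hz_len : (l ++ mid ++ r).length + 1 = n := by simp [← hx_len]; omega
  have hz_ne : l ++ mid ++ r ≠ [] := List.ne_nil_of_length_pos (by omega)
  obtain ⟨i, hi, c, hc, hx_aux⟩ :=
    exists_auxSeq_eq_insertIdx s l (mid ++ r) (by simpa using hz_ne)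
  obtain ⟨j, hj, d, hd, hy_aux⟩ := exists_auxSeq_eq_insertIdx s (l ++ mid) r hz_ne
  simp only [← List.append_assoc] at hx_aux hi
  have h_aux : auxSeq (l ++ s :: (mid ++ r)) = auxSeq (l ++ mid ++ s :: r) := by
    rw [hx_aux, hy_aux]
    refine insertIdx_eq_insertIdx_of_vtSyn_eq (M := n) (fun _ => le_one_of_mem_auxSeq) ?_
      hi hj hc hd ?_
    · rw [length_auxSeq]; omega
    · rw [← hx_aux, ← hy_aux, hx_syn, hy_syn]
  have h_run : ∀ m ∈ mid, m = s := by
    refine forall_eq_of_auxSeq_cons_append_eq (r := r) ?_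
    simpa [auxSeq_drop] using congrArg (List.drop l.length) h_aux
  rw [cons_append_eq_append_cons_of_forall_eq h_run, List.append_assoc]

lemma List.exists_eq_append_cons_of_sublist {α : Type*} {z x : List α} (h : z.Sublist x)
    (hlen : z.length + 1 = x.length) : ∃ l a r, x = l ++ a :: r ∧ z = l ++ r := by
  induction h with
  | slnil => simp at hlen
  | @cons z x a h _ =>
    exact ⟨[], a, x, rfl, h.eq_of_length (by simpa using hlen)⟩
  | @cons_cons z x a _ ih =>
    obtain ⟨l, b, r, rfl, rfl⟩ := ih (by simpa using hlen)
    exact ⟨a :: l, b, r, rfl, rfl⟩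

lemma List.eq_or_exists_sublist_of_sublist {α : Type*} {x y z : List α} (hx : x.Sublist z)
    (hy : y.Sublist z) (hxz : x.length + 1 = z.length) (hyz : y.length + 1 = z.length) :
    x = y ∨ ∃ w : List α, w.Sublist x ∧ w.Sublist y ∧ w.length + 1 = x.length := by
  induction z generalizing x y with
  | nil => simp at hxz
  | cons c z ih =>
    rcases List.sublist_cons_iff.1 hx with hx' | ⟨x, rfl, hx'⟩ <;>
      rcases List.sublist_cons_iff.1 hy with hy' | ⟨y, rfl, hy'⟩
    · exact Or.inl ((hx'.eq_of_length (by simpa using hxz)).trans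
        (hy'.eq_of_length (by simpa using hyz)).symm)
    · obtain rfl := hx'.eq_of_length (by simpa using hxz)
      exact Or.inr ⟨y, hy', List.sublist_cons_self c y, by simpa using hyz⟩
    · obtain rfl := hy'.eq_of_length (by simpa using hyz)
      exact Or.inr ⟨x, List.sublist_cons_self c x, hx', rfl⟩
    · rcases ih hx' hy' (by simpa using hxz) (by simpa using hyz) with rfl | ⟨w, hwx, hwy, hw⟩
      · exact Or.inl rfl
      · exact Or.inr ⟨c :: w, hwx.cons_cons c, hwy.cons_cons c, by simpa using hw⟩

theorem VTn.eq_of_sublist_of_sublist {n : ℕ} (hn : 2 ≤ n) {a : ZMod n} {b : ZMod 4}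
    {x y z : List ℤ} (hx : x ∈ VTn n a b) (hy : y ∈ VTn n a b) (hzx : z.Sublist x)
    (hzy : z.Sublist y) (hz : z.length + 1 = n) : x = y := by
  obtain ⟨l₁, s, r₁, rfl, rfl⟩ := List.exists_eq_append_cons_of_sublist hzx (by rw [hx.1, hz])
  obtain ⟨l₂, t, r₂, rfl, h⟩ := List.exists_eq_append_cons_of_sublist hzy (by rw [hy.1, hz])
  rcases List.append_eq_append_iff.1 h with ⟨m, rfl, rfl⟩ | ⟨m, rfl, rfl⟩
  · exact VTn.eq_of_delete_insert hn hx hy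
  · exact (VTn.eq_of_delete_insert hn hy hx).symm

theorem VTn.pairwise_disjoint_ball {n : ℕ} (hn : 2 ≤ n) (a : ZMod n) (b : ZMod 4) :
    (VTn n a b).Pairwise fun x y => Disjoint (ball x) (ball y) := by
  intro x hx y hy hne
  refine Set.disjoint_left.2 fun z hzx hzy => hne ?_
  have hx_len := hx.1
  have hy_len := hy.1
  rcases hzx with rfl | ⟨hzx_len, hzx⟩ | ⟨hzx_len, -, hzx⟩ <;>
    rcases hzy with rfl | ⟨hzy_len, hzy⟩ | ⟨hzy_len, -, hzy⟩ <;> try omega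
  · rfl
  · exact VTn.eq_of_sublist_of_sublist hn hx hy hzx hzy (by omega)
  · rcases List.eq_or_exists_sublist_of_sublist hzx hzy hzx_len hzy_len with
      h | ⟨w, hwx, hwy, hw⟩
    · exact h
    · exact VTn.eq_of_sublist_of_sublist hn hx hy hwx hwy (by omega)

-- `diffWord = diffWordFrom 0` definitionally; the start symbol is free so that induction works.
def diffWordFrom (p : ℤ) (x : List ℤ) : List ℤ :=
  List.zipWith (fun p c => mods4 (c - p)) (p :: x) x

lemma sum_diffWordFrom_cons (p a : ℤ) (t : List ℤ) :
    (diffWordFrom p (a :: t)).sum = mods4 (a - p) + (diffWordFrom a t).sum := by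
  simp [diffWordFrom]

lemma sum_diffWordFrom_nonneg (p : ℤ) (x : List ℤ) : 0 ≤ (diffWordFrom p x).sum := by
  induction x generalizing p with
  | nil => rfl
  | cons a t ih =>
    rw [sum_diffWordFrom_cons]
    have := ih a
    unfold mods4
    omega

/-- Greedy embedding: after a symbol `p`, the next symbol `a` of `x` is met `mods4 (a - p)` steps
later in the alternating sequence. -/
lemma sublist_map_range'_of_sum_diffWordFrom_le {x : List ℤ} (hx : IsQ x) {p : ℤ} {q k : ℕ}
    (hpq : p % 4 = q % 4) (hk : (diffWordFrom p x).sum ≤ k) :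
    x.Sublist ((List.range' q k).map fun i => ((i % 4 : ℕ) : ℤ) + 1) := by
  induction x generalizing p q k with
  | nil => exact List.nil_sublist _
  | cons a t ih =>
    have ha := hx a List.mem_cons_self
    have ht := sum_diffWordFrom_nonneg a t
    obtain ⟨d, hd⟩ : ∃ d : ℕ, mods4 (a - p) = d :=
      ⟨(mods4 (a - p)).toNat, by unfold mods4; omega⟩
    rw [sum_diffWordFrom_cons, hd] at hk
    unfold mods4 at hd
    have hmem : a ∈ (List.range' q d).map fun i => ((i % 4 : ℕ) : ℤ) + 1 := by
      refine List.mem_map.2 ⟨q + d - 1, List.mem_range'_1.2 (by omega), ?_⟩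
      omega
    rw [← Nat.add_sub_cancel' (show d ≤ k by omega), ← List.range'_append_1, List.map_append]
    exact (List.singleton_sublist.2 hmem).append
      (ih (p := a) (q := q + d) (k := k - d) (fun b hb => hx b (List.mem_cons_of_mem a hb))
        (by push_cast; omega) (by omega))

lemma synTime_le_sum_diffWord {x : List ℤ} (hx : IsQ x) :
    (synTime x : ℤ) ≤ (diffWord x).sum := by
  have h_nonneg : 0 ≤ (diffWord x).sum := sum_diffWordFrom_nonneg 0 x
  have h_sub : x.Sublist (altSeq (diffWord x).sum.toNat) := by
    simpa [altSeq, List.range_eq_range'] using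
      sublist_map_range'_of_sum_diffWordFrom_le hx (p := 0) (q := 0) rfl
        (k := (diffWord x).sum.toNat) (Int.self_le_toNat _)
  have : synTime x ≤ (diffWord x).sum.toNat := Nat.sInf_le h_sub
  omega

/-- The word read after `q` whose differential symbols are `5 - d` for the differential symbols
`d` of `x` read after `p`. -/
def reflectDiff : ℤ → ℤ → List ℤ → List ℤ
  | _, _, [] => []
  | p, q, a :: t =>
    mods4 (q + 5 - mods4 (a - p)) :: reflectDiff a (mods4 (q + 5 - mods4 (a - p))) t

lemma length_reflectDiff (p q : ℤ) (x : List ℤ) : (reflectDiff p q x).length = x.length := by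
  induction x generalizing p q with
  | nil => rfl
  | cons a t ih => simp [reflectDiff, ih]

lemma isQ_reflectDiff (p q : ℤ) (x : List ℤ) : IsQ (reflectDiff p q x) := by
  induction x generalizing p q with
  | nil => simp [IsQ, reflectDiff]
  | cons a t ih =>
    simp only [IsQ, reflectDiff, List.forall_mem_cons]
    exact ⟨by unfold mods4; omega, ih _ _⟩

lemma sum_diffWordFrom_reflectDiff (p q : ℤ) (x : List ℤ) :
    (diffWordFrom q (reflectDiff p q x)).sum = 5 * x.length - (diffWordFrom p x).sum := by
  induction x generalizing p q with
  | nil => rfl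
  | cons a t ih =>
    simp only [reflectDiff, sum_diffWordFrom_cons, ih, List.length_cons]
    unfold mods4
    omega

lemma reflectDiff_reflectDiff {x : List ℤ} (hx : IsQ x) (p q : ℤ) :
    reflectDiff q p (reflectDiff p q x) = x := by
  induction x generalizing p q with
  | nil => rfl
  | cons a t ih =>
    simp only [IsQ, List.forall_mem_cons] at hx
    have h : mods4 (p + 5 - mods4 (mods4 (q + 5 - mods4 (a - p)) - q)) = a := by
      unfold mods4; omega
    simp only [reflectDiff, h, ih hx.2]

noncomputable def quaternaryWords : ℕ → Finset (List ℤ)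
  | 0 => {[]}
  | n + 1 => (Finset.Icc 1 4 ×ˢ quaternaryWords n).image fun p => p.1 :: p.2

lemma mem_quaternaryWords {n : ℕ} {x : List ℤ} :
    x ∈ quaternaryWords n ↔ x.length = n ∧ IsQ x := by
  induction n generalizing x with
  | zero => constructor <;> simp +contextual [quaternaryWords, IsQ]
  | succ n ih =>
    cases x with
    | nil => simp [quaternaryWords]
    | cons a t => simp [quaternaryWords, IsQ, ih, and_comm, and_assoc, and_left_comm]

lemma card_quaternaryWords (n : ℕ) : (quaternaryWords n).card = 4 ^ n := by
  induction n with
  | zero => rfl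
  | succ n ih =>
    rw [quaternaryWords,
      Finset.card_image_of_injective _ fun p q h => by simpa [Prod.ext_iff] using h,
      Finset.card_product, ih, Int.card_Icc, pow_succ, mul_comm]
    rfl

noncomputable def lightWords (n : ℕ) : Finset (List ℤ) :=
  (quaternaryWords n).filter fun x => (diffWord x).sum ≤ (((5 * n + 1) / 2 : ℕ) : ℤ)

/-- `reflectDiff 0 0` maps words of differential sum `σ > ⌈5n/2⌉` injectively to words of
differential sum `5n - σ ≤ ⌈5n/2⌉`. -/
lemma four_pow_le_two_mul_card_lightWords (n : ℕ) : 4 ^ n ≤ 2 * (lightWords n).card := by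
  set low := lightWords n
  set high := (quaternaryWords n).filter fun x => ¬(diffWord x).sum ≤ (((5 * n + 1) / 2 : ℕ) : ℤ)
  have h_split : low.card + high.card = 4 ^ n := by
    simp only [low, high, lightWords]
    rw [Finset.card_filter_add_card_filter_not, card_quaternaryWords]
  have h_le : high.card ≤ low.card := by
    refine Finset.card_le_card_of_injOn (reflectDiff 0 0) (fun x hx => ?_) (fun x hx y hy h => ?_)
    · simp only [high, low, lightWords, Finset.mem_coe, Finset.mem_filter,
        mem_quaternaryWords] at hx ⊢
      refine ⟨⟨by rw [length_reflectDiff, hx.1.1], isQ_reflectDiff 0 0 x⟩, ?_⟩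
      have := sum_diffWordFrom_reflectDiff 0 0 x
      simp only [diffWord, diffWordFrom] at this hx ⊢
      omega
    · simp only [high, Finset.mem_coe, Finset.mem_filter, mem_quaternaryWords] at hx hy
      rw [← reflectDiff_reflectDiff hx.1.2 0 0, h, reflectDiff_reflectDiff hy.1.2]
  omega

lemma exists_le_ncard_VTnT {n : ℕ} [NeZero n] {K : ℕ} (hK : 8 * n * K ≤ 4 ^ n) :
    ∃ a b, K ≤ (VTnT n a b (((5 * n + 1) / 2 : ℕ) : ℤ)).ncard := by
  have h_low := four_pow_le_two_mul_card_lightWords n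
  obtain ⟨⟨a, b⟩, -, h_fiber⟩ := Finset.exists_le_card_fiber_of_mul_le_card_of_maps_to
    (f := fun x => ((vtSyn (auxSeq x) : ZMod n), ((x.sum : ℤ) : ZMod 4)))
    (s := lightWords n) (n := K)
    (fun _ _ => Finset.mem_univ _) Finset.univ_nonempty
    (by rw [Finset.card_univ, Fintype.card_prod, ZMod.card, ZMod.card]
        linarith [show n * 4 * K * 2 = 8 * n * K by ring])
  refine ⟨a, b, h_fiber.trans ?_⟩
  rw [← Set.ncard_coe_finset]
  refine Set.ncard_le_ncard (fun x hx => ?_)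
    ((quaternaryWords n).finite_toSet.subset fun x hx => mem_quaternaryWords.2 ⟨hx.1.1, hx.1.2.1⟩)
  simp only [lightWords, Finset.mem_coe, Finset.mem_filter, mem_quaternaryWords,
    Prod.mk.injEq] at hx
  obtain ⟨⟨⟨hx_len, hx_quat⟩, hx_time⟩, hx_syn, hx_sum⟩ := hx
  exact ⟨⟨hx_len, hx_quat, hx_syn, hx_sum⟩, (synTime_le_sum_diffWord hx_quat).trans hx_time⟩

lemma eight_mul_mul_four_pow_sub_clog_le {n : ℕ} (hn : 8 ≤ n) :
    8 * n * 4 ^ (n - Nat.clog 4 n - 5) ≤ 4 ^ n := by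
  have h_pow : n ≤ 4 ^ (n - 5) := by
    obtain ⟨k, rfl⟩ : ∃ k, n = k + 8 := ⟨n - 8, by omega⟩
    have := Nat.lt_pow_self (n := k) (a := 4) (by norm_num)
    rw [show k + 8 - 5 = k + 3 by omega, pow_add]
    omega
  have h_clog : Nat.clog 4 n ≤ n - 5 := Nat.clog_le_of_le_pow h_pow
  calc 8 * n * 4 ^ (n - Nat.clog 4 n - 5)
      ≤ 8 * 4 ^ Nat.clog 4 n * 4 ^ (n - Nat.clog 4 n - 5) := by
        gcongr; exact Nat.le_pow_clog (by norm_num) n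
    _ = 8 * 4 ^ (n - 5) := by rw [mul_assoc, ← pow_add]; congr 2; omega
    _ ≤ 4 ^ 5 * 4 ^ (n - 5) := by gcongr; norm_num
    _ = 4 ^ n := by rw [← pow_add]; congr 1; omega

/-- for all sufficiently large `n`, with `m = n - ⌈log₄ n⌉ - 5` and
`T = ⌈5n/2⌉`, there exists an `(n,T,B)`-synthesis code `C ⊆ Σ^n` with
`|C| ≥ 2^{2m}`: length `n`, synthesis time at most `2.5n`, correcting a single
insertion or deletion, with redundancy at most `2⌈log₄ n⌉ + 10` bits. -/
theorem exists_synthesis_code_special :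
    ∃ N : ℕ, ∀ n : ℕ, N ≤ n →
      ∃ C : Set (List ℤ),
        (∀ x ∈ C, x.length = n ∧ IsQ x) ∧
        (∀ x ∈ C, (synTime x : ℤ) ≤ (((5 * n + 1) / 2 : ℕ) : ℤ)) ∧
        (C.Pairwise fun x y => Disjoint (ball x) (ball y)) ∧
        2 ^ (2 * (n - Nat.clog 4 n - 5)) ≤ C.ncard := by
  refine ⟨8, fun n hn => ?_⟩
  have : NeZero n := ⟨by omega⟩
  have h_bound : 8 * n * 2 ^ (2 * (n - Nat.clog 4 n - 5)) ≤ 4 ^ n := by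
    rw [pow_mul]
    exact eight_mul_mul_four_pow_sub_clog_le hn
  obtain ⟨a, b, h_card⟩ := exists_le_ncard_VTnT h_bound
  exact ⟨VTnT n a b _, fun x hx => ⟨hx.1.1, hx.1.2.1⟩, fun x hx => hx.2,
    (VTn.pairwise_disjoint_ball (by omega) a b).mono fun x hx => hx.1, h_card⟩
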